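/- arXiv:1101.4591 — 4 statements merged into one kernel-verified Lean document; each statement's English description precedes it below -/
import Mathlib

section
/- Assume 0 < ε < 1/2 satisfies (1/2)·(1 − 2ε)^{−2}·(1 + 2ε) ≤ 1, that 0 < p ≤ 1 satisfies p^{k−1} B^k ≤ ε·8^{−k} for all k ≥ 2, and that |J_k| ≤ B^k for all k ≥ 2. Then for every α ∈ S one has |f(α)_k| ≤ p ε · 4^{−k} for every k ≥ 2, and consequently ‖f(α)‖ ≤ p ε / 2; in particular f maps S into S. -/
open scoped ENNReal

/-- The norm `‖α‖ = Σ_{k≥2} 2^k |α_k|`, valued in `[0,∞]` so that it is always defined;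
membership in the space `S` below forces it to be finite. -/
noncomputable def seqNorm (α : ℕ → ℝ) : ℝ≥0∞ :=
  ∑' k : ℕ, if 2 ≤ k then (2 : ℝ≥0∞) ^ k * ENNReal.ofReal |α k| else 0

/-- `A(α) = Σ_{k≥2} k α_k`. -/
noncomputable def seqA (α : ℕ → ℝ) : ℝ :=
  ∑' k : ℕ, if 2 ≤ k then (k : ℝ) * α k else 0

/-- The map `f(α)_k = J_k p^k (1 - 2A(α))^{-2k} (1 - 2A(α)/p)^k` for `k ≥ 2`
(entries of index `< 2` are irrelevant and set to `0`). -/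
noncomputable def fMap (p : ℝ) (J : ℕ → ℝ) (α : ℕ → ℝ) : ℕ → ℝ := fun k =>
  if 2 ≤ k then J k * p ^ k * ((1 - 2 * seqA α)⁻¹) ^ (2 * k) * (1 - 2 * seqA α / p) ^ k
  else 0

/-- The set `S = {α : ‖α‖ ≤ p ε}`. -/
def Sset (p ε : ℝ) : Set (ℕ → ℝ) := {α | seqNorm α ≤ ENNReal.ofReal (p * ε)}

/-! The coefficient `k` of `A(α)` is dominated by the weight `2^k` of `‖α‖`, so `|A(α)| ≤ pε ≤ ε`.
Hence `f(α)_k = J_k p^k q^k` with `|q| ≤ (1 - 2ε)⁻² (1 + 2ε) ≤ 2`, and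
`|f(α)_k| ≤ p (p^{k-1} B^k) 2^k ≤ pε 4^{-k}`; weighting by `2^k` and summing over `k ≥ 2`
gives `pε/2`. -/

lemma enorm_seqA_le_seqNorm (α : ℕ → ℝ) : ‖seqA α‖ₑ ≤ seqNorm α := by
  refine enorm_tsum_le_tsum_enorm.trans (ENNReal.tsum_le_tsum fun k => ?_)
  split_ifs
  · rw [enorm_mul, Real.enorm_natCast, Real.enorm_eq_ofReal_abs]
    gcongr
    exact_mod_cast (Nat.lt_two_pow_self (n := k)).le
  · simp

lemma abs_seqA_le_of_seqNorm_le {α : ℕ → ℝ} {c : ℝ} (hc : 0 ≤ c)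
    (h : seqNorm α ≤ ENNReal.ofReal c) : |seqA α| ≤ c := by
  rw [← ENNReal.ofReal_le_ofReal_iff hc, ← Real.enorm_eq_ofReal_abs]
  exact (enorm_seqA_le_seqNorm α).trans h

lemma seqNorm_eq_tsum_add_two (β : ℕ → ℝ) :
    seqNorm β = ∑' n : ℕ, (2 : ℝ≥0∞) ^ (n + 2) * ENNReal.ofReal |β (n + 2)| := by
  rw [seqNorm, ← Summable.sum_add_tsum_nat_add' (k := 2) ENNReal.summable]
  simp [Finset.sum_range_succ]

lemma seqNorm_le_of_abs_le {β : ℕ → ℝ} {c : ℝ} (hc : 0 ≤ c)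
    (h : ∀ k, 2 ≤ k → |β k| ≤ c * (4 : ℝ)⁻¹ ^ k) :
    seqNorm β ≤ ENNReal.ofReal (c / 2) := by
  have hterm : ∀ n : ℕ, (2 : ℝ≥0∞) ^ (n + 2) * ENNReal.ofReal |β (n + 2)| ≤
      ENNReal.ofReal (c / 4 * (2 : ℝ)⁻¹ ^ n) := by
    intro n
    calc (2 : ℝ≥0∞) ^ (n + 2) * ENNReal.ofReal |β (n + 2)|
        = ENNReal.ofReal (2 ^ (n + 2) * |β (n + 2)|) := by
          rw [ENNReal.ofReal_mul (by positivity), ENNReal.ofReal_pow zero_le_two,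
            ENNReal.ofReal_ofNat]
      _ ≤ ENNReal.ofReal (2 ^ (n + 2) * (c * (4 : ℝ)⁻¹ ^ (n + 2))) := by
          gcongr; exact h _ (by omega)
      _ = ENNReal.ofReal (c / 4 * (2 : ℝ)⁻¹ ^ n) := by
          congr 1
          rw [show (4 : ℝ) = 2 ^ 2 by norm_num, inv_pow, inv_pow, ← pow_mul]
          field_simp
          ring
  have hgeom : Summable fun n : ℕ => (2 : ℝ)⁻¹ ^ n :=
    summable_geometric_of_lt_one (by norm_num) (by norm_num)
  calc seqNorm β ≤ ∑' n : ℕ, ENNReal.ofReal (c / 4 * (2 : ℝ)⁻¹ ^ n) := by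
        rw [seqNorm_eq_tsum_add_two]; exact ENNReal.tsum_le_tsum hterm
    _ = ENNReal.ofReal (c / 4 * 2) := by
        rw [← ENNReal.ofReal_tsum_of_nonneg (fun n => by positivity) (hgeom.mul_left _),
          tsum_mul_left, tsum_geometric_inv_two]
    _ = ENNReal.ofReal (c / 2) := by ring_nf

section FMap

variable {p ε : ℝ}

lemma fMap_eq_mul_pow (J : ℕ → ℝ) (α : ℕ → ℝ) {k : ℕ} (hk : 2 ≤ k) :
    fMap p J α k =
      J k * p ^ k * (((1 - 2 * seqA α)⁻¹) ^ 2 * (1 - 2 * seqA α / p)) ^ k := by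
  rw [fMap, if_pos hk, mul_pow, pow_mul]
  ring

lemma abs_inv_sq_mul_le {A : ℝ} (hp0 : 0 < p) (hp1 : p ≤ 1) (hε : ε < 1 / 2)
    (hA : |A| ≤ p * ε) :
    |((1 - 2 * A)⁻¹) ^ 2 * (1 - 2 * A / p)| ≤ ((1 - 2 * ε)⁻¹) ^ 2 * (1 + 2 * ε) := by
  have hε0 : 0 ≤ ε := nonneg_of_mul_nonneg_right ((abs_nonneg A).trans hA) hp0
  have hAε : |A| ≤ ε := hA.trans (mul_le_of_le_one_left hε0 hp1)
  have hAp : |A / p| ≤ ε := by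
    rw [abs_div, abs_of_pos hp0, div_le_iff₀ hp0, mul_comm]
    exact hA
  rw [abs_mul, abs_pow, abs_inv]
  gcongr
  · linarith
  · linarith [le_abs_self (1 - 2 * A), (abs_le.1 hAε).2]
  · rw [mul_div_assoc]
    refine (abs_sub _ _).trans ?_
    rw [abs_one, abs_mul, abs_two]
    linarith

lemma abs_fMap_le {B : ℝ} {J : ℕ → ℝ} {α : ℕ → ℝ} (hp0 : 0 < p) (hp1 : p ≤ 1)
    (hε : ε < 1 / 2) (hcond : (1 / 2) * ((1 - 2 * ε)⁻¹) ^ 2 * (1 + 2 * ε) ≤ 1)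
    (hpB : ∀ k : ℕ, 2 ≤ k → p ^ (k - 1) * B ^ k ≤ ε * (8 : ℝ)⁻¹ ^ k)
    (hJ : ∀ k : ℕ, 2 ≤ k → |J k| ≤ B ^ k) (hA : |seqA α| ≤ p * ε) {k : ℕ} (hk : 2 ≤ k) :
    |fMap p J α k| ≤ p * ε * (4 : ℝ)⁻¹ ^ k := by
  have hq := abs_inv_sq_mul_le hp0 hp1 hε hA
  have hBk : 0 ≤ B ^ k := (abs_nonneg _).trans (hJ k hk)
  rw [fMap_eq_mul_pow J α hk, abs_mul, abs_mul, abs_pow, abs_pow, abs_of_pos hp0]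
  calc |J k| * p ^ k * |((1 - 2 * seqA α)⁻¹) ^ 2 * (1 - 2 * seqA α / p)| ^ k
      ≤ B ^ k * p ^ k * 2 ^ k := by
        gcongr
        · exact hJ k hk
        · linarith
    _ = p * (p ^ (k - 1) * B ^ k) * 2 ^ k := by
        rw [← mul_assoc, mul_pow_sub_one (by omega)]
        ring
    _ ≤ p * (ε * (8 : ℝ)⁻¹ ^ k) * 2 ^ k := by
        gcongr p * ?_ * _
        exact hpB k hk
    _ = p * ε * (4 : ℝ)⁻¹ ^ k := by
        rw [show (4 : ℝ)⁻¹ = 8⁻¹ * 2 by norm_num, mul_pow]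
        ring

end FMap

theorem stmt0_general (p ε B : ℝ) (J : ℕ → ℝ)
    (hε0 : 0 < ε) (hε : ε < 1 / 2)
    (hcond : (1 / 2) * ((1 - 2 * ε)⁻¹) ^ 2 * (1 + 2 * ε) ≤ 1)
    (hp0 : 0 < p) (hp1 : p ≤ 1)
    (hpB : ∀ k : ℕ, 2 ≤ k → p ^ (k - 1) * B ^ k ≤ ε * (8 : ℝ)⁻¹ ^ k)
    (hJ : ∀ k : ℕ, 2 ≤ k → |J k| ≤ B ^ k) :
    ∀ α ∈ Sset p ε,
      (∀ k : ℕ, 2 ≤ k → |fMap p J α k| ≤ p * ε * (4 : ℝ)⁻¹ ^ k) ∧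
      seqNorm (fMap p J α) ≤ ENNReal.ofReal (p * ε / 2) ∧
      fMap p J α ∈ Sset p ε := by
  intro α hα
  have hpε : 0 ≤ p * ε := by positivity
  have hA : |seqA α| ≤ p * ε := abs_seqA_le_of_seqNorm_le hpε hα
  have hpoint : ∀ k : ℕ, 2 ≤ k → |fMap p J α k| ≤ p * ε * (4 : ℝ)⁻¹ ^ k :=
    fun k hk => abs_fMap_le hp0 hp1 hε hcond hpB hJ hA hk
  have hnorm := seqNorm_le_of_abs_le hpε hpoint
  exact ⟨hpoint, hnorm, hnorm.trans (ENNReal.ofReal_le_ofReal (half_le_self hpε))⟩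

theorem stmt0 (p ε B : ℝ) (J : ℕ → ℝ)
    (hε0 : 0 < ε) (hε : ε < 1 / 2)
    (hcond : (1 / 2) * ((1 - 2 * ε)⁻¹) ^ 2 * (1 + 2 * ε) ≤ 1)
    (hp0 : 0 < p) (hp1 : p ≤ 1) (hB : 0 < B)
    (hpB : ∀ k : ℕ, 2 ≤ k → p ^ (k - 1) * B ^ k ≤ ε * (8 : ℝ)⁻¹ ^ k)
    (hJ : ∀ k : ℕ, 2 ≤ k → |J k| ≤ B ^ k) :
    ∀ α ∈ Sset p ε,
      (∀ k : ℕ, 2 ≤ k → |fMap p J α k| ≤ p * ε * (4 : ℝ)⁻¹ ^ k) ∧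
      seqNorm (fMap p J α) ≤ ENNReal.ofReal (p * ε / 2) ∧
      fMap p J α ∈ Sset p ε :=
  stmt0_general p ε B J hε0 hε hcond hp0 hp1 hpB hJ
end

section
/- Assume 0 < ε < 1/2 satisfies both (1/2)·(1 − 2ε)^{−2}·(1 + 2ε) ≤ 1 and 6ε/(1 − 2ε) ≤ 1, that 0 < p ≤ 1 satisfies p^{k−1} B^k ≤ ε·8^{−k} for all k ≥ 2, and that |J_k| ≤ B^k for all k ≥ 2. Then f is a contraction on S: there exists a constant c with 0 ≤ c < 1 such that for all α, β ∈ S one has ‖f(α) − f(β)‖ ≤ c · ‖α − β‖. -/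
open scoped ENNReal

/-! Write `f(α)_k = J_k p^k g(A(α))^k` with `g(a) = (1 - 2a)⁻² (1 - 2a/p)` (`fMapBase`). On `S`
we have `|A(α)| ≤ pε/2`, so the first condition on `ε` gives `|g| ≤ 2`, and `g` is Lipschitz
there with constant `L = 2(1 - 2ε)⁻²/p + 8(1 - 2ε)⁻¹`. The hypothesis `p^{k-1} B^k ≤ ε 8^{-k}`
absorbs the factor `2^k · k 2^{k-1}` coming from the weight and from `x^k - y^k`, leaving
`2^k |f(α)_k - f(β)_k| ≤ (pεL/2) k 2^{-k} |A(α) - A(β)|`. Summing, with `Σ k 2^{-k} = 2` and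
`|A(α) - A(β)| ≤ ‖α - β‖/2`, gives the contraction constant
`c = pεL/2 = ε(1 - 2ε)⁻² + 4pε(1 - 2ε)⁻¹`, which the second condition keeps below `8/9`. -/

noncomputable def fMapBase (p a : ℝ) : ℝ := ((1 - 2 * a)⁻¹) ^ 2 * (1 - 2 * a / p)

noncomputable def fMapBaseLipConst (p ε : ℝ) : ℝ := 2 * ((1 - 2 * ε)⁻¹) ^ 2 / p + 8 * (1 - 2 * ε)⁻¹

noncomputable def seqATerm (α : ℕ → ℝ) (k : ℕ) : ℝ := if 2 ≤ k then (k : ℝ) * α k else 0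

section WeightedSeq

variable {α β : ℕ → ℝ}

lemma seqNorm_ne_top_of_mem_Sset {p ε : ℝ} (hα : α ∈ Sset p ε) : seqNorm α ≠ ⊤ :=
  ne_top_of_le_ne_top ENNReal.ofReal_ne_top hα

lemma seqA_eq_tsum (α : ℕ → ℝ) : seqA α = ∑' k, seqATerm α k := rfl

lemma two_mul_enorm_seqATerm_le (α : ℕ → ℝ) (k : ℕ) :
    2 * ‖seqATerm α k‖ₑ ≤ if 2 ≤ k then (2 : ℝ≥0∞) ^ k * ENNReal.ofReal |α k| else 0 := by
  unfold seqATerm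
  split_ifs with hk
  · have hk2 : 2 * k ≤ 2 ^ k := by
      obtain ⟨m, rfl⟩ : ∃ m, k = m + 1 := ⟨k - 1, by omega⟩
      have := @Nat.lt_two_pow_self m
      rw [pow_succ]
      omega
    rw [Real.enorm_eq_ofReal_abs, ← ENNReal.ofReal_ofNat 2, ← ENNReal.ofReal_mul zero_le_two,
      ← ENNReal.ofReal_pow zero_le_two, ← ENNReal.ofReal_mul (by positivity), abs_mul,
      Nat.abs_cast, ← mul_assoc]
    gcongr
    exact_mod_cast hk2
  · simp

lemma two_mul_tsum_enorm_seqATerm_le (α : ℕ → ℝ) :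
    2 * ∑' k, ‖seqATerm α k‖ₑ ≤ seqNorm α := by
  rw [← ENNReal.tsum_mul_left]
  exact ENNReal.tsum_le_tsum (two_mul_enorm_seqATerm_le α)

lemma two_mul_ofReal_abs_seqA_le (α : ℕ → ℝ) : 2 * ENNReal.ofReal |seqA α| ≤ seqNorm α := by
  rw [← Real.enorm_eq_ofReal_abs, seqA_eq_tsum]
  exact (mul_le_mul_right enorm_tsum_le_tsum_enorm 2).trans (two_mul_tsum_enorm_seqATerm_le α)

lemma summable_seqATerm (h : seqNorm α ≠ ⊤) : Summable (seqATerm α) := by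
  refine Summable.of_norm (tsum_enorm_ne_top_iff_summable_norm.mp (ne_top_of_le_ne_top h ?_))
  exact le_mul_of_one_le_left' one_le_two |>.trans (two_mul_tsum_enorm_seqATerm_le α)

lemma seqA_sub (hα : seqNorm α ≠ ⊤) (hβ : seqNorm β ≠ ⊤) :
    seqA (fun k => α k - β k) = seqA α - seqA β := by
  simp only [seqA_eq_tsum]
  rw [← (summable_seqATerm hα).tsum_sub (summable_seqATerm hβ)]
  congr 1 with k
  unfold seqATerm
  split_ifs <;> ring

lemma two_mul_abs_seqA_le_of_mem_Sset {p ε : ℝ} (hpε : 0 ≤ p * ε) (hα : α ∈ Sset p ε) :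
    2 * |seqA α| ≤ p * ε := by
  rw [← ENNReal.ofReal_le_ofReal_iff hpε, ENNReal.ofReal_mul zero_le_two, ENNReal.ofReal_ofNat]
  exact (two_mul_ofReal_abs_seqA_le α).trans hα

lemma seqNorm_le_of_two_pow_mul_abs_le {C : ℝ} (hC : 0 ≤ C)
    (h : ∀ k, 2 ≤ k → 2 ^ k * |α k| ≤ C * (k * (1 / 2) ^ k)) :
    seqNorm α ≤ ENNReal.ofReal (2 * C) := by
  have hsum : Summable fun k : ℕ => C * (k * (1 / 2 : ℝ) ^ k) :=
    (summable_pow_mul_geometric_of_norm_lt_one 1 (by norm_num : ‖(1 / 2 : ℝ)‖ < 1)).mul_left C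
      |>.congr fun k => by simp
  calc seqNorm α ≤ ∑' k : ℕ, ENNReal.ofReal (C * (k * (1 / 2) ^ k)) := by
        refine ENNReal.tsum_le_tsum fun k => ?_
        split_ifs with hk
        · rw [← ENNReal.ofReal_ofNat 2, ← ENNReal.ofReal_pow zero_le_two,
            ← ENNReal.ofReal_mul (by positivity)]
          exact ENNReal.ofReal_le_ofReal (h k hk)
        · exact zero_le
    _ = ENNReal.ofReal (∑' k : ℕ, C * (k * (1 / 2) ^ k)) :=
        (ENNReal.ofReal_tsum_of_nonneg (fun k => by positivity) hsum).symm
    _ = ENNReal.ofReal (2 * C) := by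
        rw [tsum_mul_left, tsum_coe_mul_geometric_of_norm_lt_one (by norm_num)]
        norm_num [mul_comm]

end WeightedSeq

lemma two_pow_mul_abs_sub_pow_le {p ε B J x y : ℝ} {k : ℕ} (hp : 0 ≤ p)
    (hpB : p ^ (k - 1) * B ^ k ≤ ε * (8 : ℝ)⁻¹ ^ k) (hJ : |J| ≤ B ^ k)
    (hx : |x| ≤ 2) (hy : |y| ≤ 2) :
    2 ^ k * |J * p ^ k * x ^ k - J * p ^ k * y ^ k| ≤ p * ε / 2 * (k * (1 / 2) ^ k) * |x - y| := by
  obtain _ | m := k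
  · simp
  rw [Nat.add_sub_cancel] at hpB
  have hB : 0 ≤ B ^ (m + 1) := (abs_nonneg J).trans hJ
  have hpow : |x ^ (m + 1) - y ^ (m + 1)| ≤ |x - y| * (m + 1 : ℕ) * 2 ^ m :=
    (abs_pow_sub_pow_le ..).trans (by rw [Nat.add_sub_cancel]; gcongr; exact max_le hx hy)
  calc 2 ^ (m + 1) * |J * p ^ (m + 1) * x ^ (m + 1) - J * p ^ (m + 1) * y ^ (m + 1)|
      = 2 ^ (m + 1) * p ^ (m + 1) * |J| * |x ^ (m + 1) - y ^ (m + 1)| := by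
        rw [← mul_sub, abs_mul, abs_mul, abs_of_nonneg (pow_nonneg hp _)]
        ring
    _ ≤ 2 ^ (m + 1) * p ^ (m + 1) * B ^ (m + 1) * (|x - y| * (m + 1 : ℕ) * 2 ^ m) := by
        gcongr
    _ = p * (p ^ m * B ^ (m + 1)) * (2 ^ (m + 1) * 2 ^ m) * (m + 1 : ℕ) * |x - y| := by ring
    _ ≤ p * (ε * (8 : ℝ)⁻¹ ^ (m + 1)) * (2 ^ (m + 1) * 2 ^ m) * (m + 1 : ℕ) * |x - y| := by
        gcongr
    _ = p * ε / 2 * ((m + 1 : ℕ) * (1 / 2) ^ (m + 1)) * |x - y| := by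
        have h8 : (8 : ℝ)⁻¹ ^ (m + 1) * (2 ^ (m + 1) * 2 ^ m) = (1 / 2) ^ (m + 1) / 2 := by
          rw [eq_div_iff two_ne_zero, mul_assoc, mul_assoc, ← pow_succ, ← mul_pow, ← mul_pow]
          norm_num
        linear_combination (p * ε * (m + 1 : ℕ) * |x - y|) * h8

section FMapBase

variable {p ε a b : ℝ}

lemma abs_inv_one_sub_two_mul_le (hε : ε < 1 / 2) (ha : |a| ≤ ε) :
    |(1 - 2 * a)⁻¹| ≤ (1 - 2 * ε)⁻¹ := by
  have := abs_le.mp ha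
  rw [abs_of_pos (inv_pos.mpr (by linarith))]
  exact inv_anti₀ (by linarith) (by linarith)

lemma abs_one_sub_two_mul_div_le (hp : 0 < p) (ha : |a| ≤ p * ε) :
    |1 - 2 * a / p| ≤ 1 + 2 * ε := by
  have hap : |a / p| ≤ ε := by rwa [abs_div, abs_of_pos hp, div_le_iff₀' hp]
  calc |1 - 2 * a / p| ≤ |1| + |2 * (a / p)| := by rw [mul_div_assoc]; exact abs_sub _ _
    _ ≤ 1 + 2 * ε := by rw [abs_one, abs_mul, abs_two]; linarith

lemma abs_le_of_abs_le_mul (hp : 0 < p) (hp1 : p ≤ 1) (ha : |a| ≤ p * ε) : |a| ≤ ε := by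
  nlinarith [abs_nonneg a]

lemma abs_fMapBase_le (hp : 0 < p) (hp1 : p ≤ 1) (hε : ε < 1 / 2)
    (hcond : ((1 - 2 * ε)⁻¹) ^ 2 * (1 + 2 * ε) ≤ 2)
    (ha : |a| ≤ p * ε) : |fMapBase p a| ≤ 2 :=
  calc |fMapBase p a| = |(1 - 2 * a)⁻¹| ^ 2 * |1 - 2 * a / p| := by
        rw [fMapBase, abs_mul, abs_pow]
    _ ≤ ((1 - 2 * ε)⁻¹) ^ 2 * (1 + 2 * ε) := by
        gcongr
        · exact abs_inv_one_sub_two_mul_le hε (abs_le_of_abs_le_mul hp hp1 ha)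
        · exact abs_one_sub_two_mul_div_le hp ha
    _ ≤ 2 := hcond

lemma abs_fMapBase_sub_le (hp : 0 < p) (hp1 : p ≤ 1) (hε : ε < 1 / 2)
    (hcond : ((1 - 2 * ε)⁻¹) ^ 2 * (1 + 2 * ε) ≤ 2)
    (ha : |a| ≤ p * ε) (hb : |b| ≤ p * ε) :
    |fMapBase p a - fMapBase p b| ≤ fMapBaseLipConst p ε * |a - b| := by
  rw [fMapBaseLipConst]
  set r := (1 - 2 * ε)⁻¹
  have hr : 0 ≤ r := inv_nonneg.mpr (by linarith)
  have hε0 : 0 ≤ ε := by nlinarith [abs_nonneg a]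
  have hva := abs_inv_one_sub_two_mul_le hε (abs_le_of_abs_le_mul hp hp1 ha)
  have hvb := abs_inv_one_sub_two_mul_le hε (abs_le_of_abs_le_mul hp hp1 hb)
  have hwb := abs_one_sub_two_mul_div_le hp hb
  have hv : |(1 - 2 * a)⁻¹ - (1 - 2 * b)⁻¹| ≤ 2 * r ^ 2 * |a - b| := by
    have ha' := abs_le.mp (abs_le_of_abs_le_mul hp hp1 ha)
    have hb' := abs_le.mp (abs_le_of_abs_le_mul hp hp1 hb)
    have hsub : (1 - 2 * a)⁻¹ - (1 - 2 * b)⁻¹ = 2 * (a - b) * ((1 - 2 * a)⁻¹ * (1 - 2 * b)⁻¹) := by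
      field_simp [show 1 - 2 * a ≠ 0 by linarith, show 1 - 2 * b ≠ 0 by linarith]
      ring
    rw [hsub, abs_mul, abs_mul, abs_mul, abs_two]
    nlinarith [mul_le_mul hva hvb (abs_nonneg _) hr, abs_nonneg (a - b), abs_nonneg ((1 - 2 * a)⁻¹),
      abs_nonneg ((1 - 2 * b)⁻¹)]
  have hw : |(1 - 2 * a / p) - (1 - 2 * b / p)| = 2 * |a - b| / p := by
    rw [show (1 - 2 * a / p) - (1 - 2 * b / p) = 2 * (b - a) / p by ring, abs_div, abs_mul, abs_two,
      abs_of_pos hp, abs_sub_comm]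
  calc |fMapBase p a - fMapBase p b|
      = |((1 - 2 * a)⁻¹) ^ 2 * ((1 - 2 * a / p) - (1 - 2 * b / p)) + (1 - 2 * b / p) *
          ((1 - 2 * a)⁻¹ + (1 - 2 * b)⁻¹) * ((1 - 2 * a)⁻¹ - (1 - 2 * b)⁻¹)| := by
        unfold fMapBase
        ring_nf
    _ ≤ |(1 - 2 * a)⁻¹| ^ 2 * |(1 - 2 * a / p) - (1 - 2 * b / p)| + |1 - 2 * b / p| *
          (|(1 - 2 * a)⁻¹| + |(1 - 2 * b)⁻¹|) * |(1 - 2 * a)⁻¹ - (1 - 2 * b)⁻¹| := by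
        refine (abs_add_le _ _).trans ?_
        rw [abs_mul, abs_mul, abs_mul, abs_pow]
        gcongr
        exact abs_add_le _ _
    _ ≤ r ^ 2 * (2 * |a - b| / p) + (1 + 2 * ε) * (r + r) * (2 * r ^ 2 * |a - b|) := by
        rw [hw]
        gcongr
    _ = (2 * r ^ 2 / p + 4 * (r ^ 2 * (1 + 2 * ε)) * r) * |a - b| := by ring
    _ ≤ (2 * r ^ 2 / p + 8 * r) * |a - b| := by
        gcongr
        nlinarith [mul_le_mul_of_nonneg_right hcond hr]

lemma fMapBaseLipConst_pos (hp : 0 < p) (hε : ε < 1 / 2) : 0 < fMapBaseLipConst p ε := by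
  have hr : 0 < (1 - 2 * ε)⁻¹ := inv_pos.mpr (by linarith)
  unfold fMapBaseLipConst
  positivity

-- `r = 1 + 2εr` and `6εr ≤ 1` give `r ≤ 4/3`, so the constant is at most `2/9 + 2/3`.
lemma mul_fMapBaseLipConst_lt_one (hp : 0 < p) (hp1 : p ≤ 1) (hε0 : 0 ≤ ε) (hε : ε < 1 / 2)
    (hcond : 6 * ε / (1 - 2 * ε) ≤ 1) : p * ε / 2 * fMapBaseLipConst p ε < 1 := by
  unfold fMapBaseLipConst
  set r := (1 - 2 * ε)⁻¹ with hr
  have hr0 : 0 < r := inv_pos.mpr (by linarith)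
  have hεr : 6 * ε * r ≤ 1 := by rwa [div_eq_mul_inv] at hcond
  have hr1 : r = 1 + 2 * ε * r := by
    rw [hr]; field_simp [show 1 - 2 * ε ≠ 0 by linarith]; ring
  have hc : p * ε / 2 * (2 * r ^ 2 / p + 8 * r) = ε * r ^ 2 + 4 * p * ε * r := by
    field_simp; ring
  rw [hc]
  nlinarith

end FMapBase

lemma fMap_eq {p : ℝ} {J α : ℕ → ℝ} {k : ℕ} (hk : 2 ≤ k) :
    fMap p J α k = J k * p ^ k * fMapBase p (seqA α) ^ k := by
  rw [fMap, if_pos hk, fMapBase, mul_pow, pow_mul, mul_assoc (J k * p ^ k)]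

theorem stmt1_general (p ε B : ℝ) (J : ℕ → ℝ)
    (hε0 : 0 < ε) (hε : ε < 1 / 2)
    (hcond1 : (1 / 2) * ((1 - 2 * ε)⁻¹) ^ 2 * (1 + 2 * ε) ≤ 1)
    (hcond2 : 6 * ε / (1 - 2 * ε) ≤ 1)
    (hp0 : 0 < p) (hp1 : p ≤ 1)
    (hpB : ∀ k : ℕ, 2 ≤ k → p ^ (k - 1) * B ^ k ≤ ε * (8 : ℝ)⁻¹ ^ k)
    (hJ : ∀ k : ℕ, 2 ≤ k → |J k| ≤ B ^ k) :
    ∃ c : ℝ, 0 ≤ c ∧ c < 1 ∧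
      ∀ α ∈ Sset p ε, ∀ β ∈ Sset p ε,
        seqNorm (fun k => fMap p J α k - fMap p J β k) ≤
          ENNReal.ofReal c * seqNorm (fun k => α k - β k) := by
  have hcond : ((1 - 2 * ε)⁻¹) ^ 2 * (1 + 2 * ε) ≤ 2 := by linarith
  set L := fMapBaseLipConst p ε
  have hc0 : 0 ≤ p * ε / 2 * L := by
    have := fMapBaseLipConst_pos hp0 hε
    positivity
  refine ⟨p * ε / 2 * L, hc0, mul_fMapBaseLipConst_lt_one hp0 hp1 hε0.le hε hcond2,
    fun α hα β hβ => ?_⟩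
  have hpε : 0 ≤ p * ε := by positivity
  have ha : |seqA α| ≤ p * ε := by
    linarith [two_mul_abs_seqA_le_of_mem_Sset hpε hα, abs_nonneg (seqA α)]
  have hb : |seqA β| ≤ p * ε := by
    linarith [two_mul_abs_seqA_le_of_mem_Sset hpε hβ, abs_nonneg (seqA β)]
  calc seqNorm (fun k => fMap p J α k - fMap p J β k)
      ≤ ENNReal.ofReal (2 * (p * ε / 2 * L * |seqA α - seqA β|)) := by
        refine seqNorm_le_of_two_pow_mul_abs_le (by positivity) fun k hk => ?_
        rw [fMap_eq hk, fMap_eq hk]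
        refine (two_pow_mul_abs_sub_pow_le hp0.le (hpB k hk) (hJ k hk)
          (abs_fMapBase_le hp0 hp1 hε hcond ha) (abs_fMapBase_le hp0 hp1 hε hcond hb)).trans ?_
        calc _ ≤ p * ε / 2 * (k * (1 / 2) ^ k) * (L * |seqA α - seqA β|) := by
              gcongr
              exact abs_fMapBase_sub_le hp0 hp1 hε hcond ha hb
          _ = _ := by ring
    _ = ENNReal.ofReal (p * ε / 2 * L) * (2 * ENNReal.ofReal |seqA α - seqA β|) := by
        rw [mul_left_comm, ENNReal.ofReal_mul hc0, ENNReal.ofReal_mul zero_le_two,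
          ENNReal.ofReal_ofNat]
    _ ≤ ENNReal.ofReal (p * ε / 2 * L) * seqNorm (fun k => α k - β k) := by
        rw [← seqA_sub (seqNorm_ne_top_of_mem_Sset hα) (seqNorm_ne_top_of_mem_Sset hβ)]
        gcongr
        exact two_mul_ofReal_abs_seqA_le _

theorem stmt1 (p ε B : ℝ) (J : ℕ → ℝ)
    (hε0 : 0 < ε) (hε : ε < 1 / 2)
    (hcond1 : (1 / 2) * ((1 - 2 * ε)⁻¹) ^ 2 * (1 + 2 * ε) ≤ 1)
    (hcond2 : 6 * ε / (1 - 2 * ε) ≤ 1)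
    (hp0 : 0 < p) (hp1 : p ≤ 1) (hB : 0 < B)
    (hpB : ∀ k : ℕ, 2 ≤ k → p ^ (k - 1) * B ^ k ≤ ε * (8 : ℝ)⁻¹ ^ k)
    (hJ : ∀ k : ℕ, 2 ≤ k → |J k| ≤ B ^ k) :
    ∃ c : ℝ, 0 ≤ c ∧ c < 1 ∧
      ∀ α ∈ Sset p ε, ∀ β ∈ Sset p ε,
        seqNorm (fun k => fMap p J α k - fMap p J β k) ≤
          ENNReal.ofReal c * seqNorm (fun k => α k - β k) :=
  stmt1_general p ε B J hε0 hε hcond1 hcond2 hp0 hp1 hpB hJ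
end

section
/- Assume 0 < ε < 1/2 satisfies both (1/2)·(1 − 2ε)^{−2}·(1 + 2ε) ≤ 1 and 6ε/(1 − 2ε) ≤ 1, that 0 < p ≤ 1 satisfies p^{k−1} B^k ≤ ε·8^{−k} for all k ≥ 2, and that |J_k| ≤ B^k for all k ≥ 2. Then there exists a unique α* ∈ S with f(α*) = α*, and for every starting point α ∈ S the sequence of iterates f^{(n)}(α) converges to α* in the norm ‖·‖ as n → ∞. -/
open scoped ENNReal

/-!
Write `b(a) = p (1 - 2a)⁻² (1 - 2a/p)`, so that `f(α)_k = J_k b(A(α))^k`: the map `f` factors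
through the scalar `A`, and `α ↦ A(α)` sends fixed points of `f` to fixed points of the scalar map
`g(a) = A((J_k b(a)^k)_k)`, with inverse `a ↦ (J_k b(a)^k)_k`. Since `2|A(α)| ≤ ‖α‖`, the growth
conditions on `J` and `p` make `g` a contraction (constant `1/4`) of `[-pε/2, pε/2]`, and `S` is
mapped into it by `A`. Banach's fixed point theorem for `g` gives the fixed point, its uniqueness
and the convergence of `g`-orbits; the convergence transfers to `f` because
`‖f(α) - f(β)‖ ≤ 4ε |A(α) - A(β)|` on `S`.
-/

open scoped NNReal
open Set Filter Topology Function

noncomputable def fBase (p a : ℝ) : ℝ := p * ((1 - 2 * a)⁻¹) ^ 2 * (1 - 2 * a / p)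

lemma abs_fBase_le {p ε a : ℝ} (hp0 : 0 < p) (hp1 : p ≤ 1) (hε : ε < 1 / 2) (ha : |a| ≤ p * ε) :
    |fBase p a| ≤ p * (((1 - 2 * ε)⁻¹) ^ 2 * (1 + 2 * ε)) := by
  have hpε : p * ε ≤ ε := by nlinarith [abs_nonneg a]
  have hden : 1 - 2 * ε ≤ 1 - 2 * a := by linarith [le_abs_self a]
  have hinv : |(1 - 2 * a)⁻¹| ≤ (1 - 2 * ε)⁻¹ := by
    rw [abs_inv, abs_of_pos (by linarith)]
    exact inv_anti₀ (by linarith) hden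
  have hnum : |1 - 2 * a / p| ≤ 1 + 2 * ε := by
    have : |a / p| ≤ ε := by
      rw [abs_div, abs_of_pos hp0, div_le_iff₀ hp0]; linarith
    calc |1 - 2 * a / p| ≤ |1| + |2 * (a / p)| := by rw [mul_div_assoc]; exact abs_sub _ _
      _ ≤ 1 + 2 * ε := by rw [abs_one, abs_mul, abs_two]; linarith
  rw [fBase, abs_mul, abs_mul, abs_pow, abs_of_pos hp0, mul_assoc]
  gcongr

lemma abs_fBase_sub_le {p a b : ℝ} (hp0 : 0 < p) (hp1 : p ≤ 1) (ha : |a| ≤ 1 / 16)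
    (hb : |b| ≤ 1 / 16) : |fBase p a - fBase p b| ≤ 4 * |a - b| := by
  obtain ⟨ha1, ha2⟩ := abs_le.mp ha
  obtain ⟨hb1, hb2⟩ := abs_le.mp hb
  set x := (1 - 2 * a)⁻¹ with hx
  set y := (1 - 2 * b)⁻¹ with hy
  have hx0 : 0 < x := inv_pos.mpr (by linarith)
  have hy0 : 0 < y := inv_pos.mpr (by linarith)
  have hx1 : x ≤ 8 / 7 := by
    rw [hx, inv_le_comm₀ (by linarith) (by norm_num)]; linarith
  have hy1 : y ≤ 8 / 7 := by
    rw [hy, inv_le_comm₀ (by linarith) (by norm_num)]; linarith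
  -- `fBase p a = (p - 1) x² + x`, and `x - y = 2 (a - b) x y`
  have key : fBase p a - fBase p b = 2 * (a - b) * (x * y) * ((p - 1) * (x + y) + 1) := by
    have : 1 - 2 * a ≠ 0 := by linarith
    have : 1 - 2 * b ≠ 0 := by linarith
    rw [fBase, fBase, hx, hy]
    field_simp
    ring
  have hmid : |(p - 1) * (x + y) + 1| ≤ 9 / 7 := by
    rw [abs_le]; constructor <;> nlinarith
  rw [key, abs_mul, abs_mul, abs_mul, abs_two, abs_of_pos (mul_pos hx0 hy0)]
  have hxy : x * y ≤ 64 / 49 := by nlinarith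
  calc 2 * |a - b| * (x * y) * |(p - 1) * (x + y) + 1| ≤ 2 * |a - b| * (64 / 49) * (9 / 7) := by
        gcongr
    _ ≤ 4 * |a - b| := by nlinarith [abs_nonneg (a - b)]

-- The weights `k 2⁻⁽ᵏ⁺¹⁾` sum to `1`; the factor `k` absorbs the `k` in
-- `|xᵏ - yᵏ| ≤ k M^(k-1) |x - y|`.
lemma seqNorm_le_ofReal {β : ℕ → ℝ} {C : ℝ}
    (h : ∀ k, 2 ≤ k → 2 ^ k * |β k| ≤ C * (k * 2⁻¹ ^ (k + 1))) :
    seqNorm β ≤ ENNReal.ofReal C := by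
  have hC : 0 ≤ C := by
    have := h 2 le_rfl
    norm_num at this
    nlinarith [abs_nonneg (β 2)]
  have hc : 0 ≤ fun k : ℕ => C * (k * 2⁻¹ ^ (k + 1)) := fun k => by positivity
  have hsum : HasSum (fun k : ℕ => C * (k * 2⁻¹ ^ (k + 1))) C := by
    have := (hasSum_coe_mul_geometric_of_norm_lt_one (𝕜 := ℝ) (r := 2⁻¹) (by norm_num)).mul_left
      (C / 2)
    have e : (fun k : ℕ => C * (k * 2⁻¹ ^ (k + 1))) = fun k : ℕ => C / 2 * (k * 2⁻¹ ^ k) := by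
      ext k; ring
    have hv : C / 2 * (2⁻¹ / (1 - 2⁻¹) ^ 2 : ℝ) = C := by norm_num
    rw [hv] at this
    rwa [e]
  rw [← hsum.tsum_eq, ENNReal.ofReal_tsum_of_nonneg hc hsum.summable, seqNorm]
  refine ENNReal.tsum_le_tsum fun k => ?_
  split_ifs with hk
  · rw [← ENNReal.ofReal_ofNat 2, ← ENNReal.ofReal_pow zero_le_two,
      ← ENNReal.ofReal_mul (by positivity)]
    exact ENNReal.ofReal_le_ofReal (h k hk)
  · exact zero_le

lemma Nat.two_mul_le_two_pow (k : ℕ) : 2 * k ≤ 2 ^ k := by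
  rcases k with _ | m
  · simp
  · have := Nat.lt_two_pow_self (n := m)
    rw [pow_succ]
    omega

lemma tsum_enorm_seqA_term_le (β : ℕ → ℝ) :
    ∑' k : ℕ, ‖if 2 ≤ k then (k : ℝ) * β k else 0‖ₑ ≤ seqNorm β / 2 := by
  rw [seqNorm, div_eq_mul_inv, ← ENNReal.tsum_mul_right]
  refine ENNReal.tsum_le_tsum fun k => ?_
  split_ifs
  · have hk : (2 * k : ℝ) ≤ 2 ^ k := by exact_mod_cast Nat.two_mul_le_two_pow k
    rw [Real.enorm_eq_ofReal_abs, ← ENNReal.ofReal_ofNat 2, ← ENNReal.ofReal_pow zero_le_two,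
      ← ENNReal.ofReal_mul (by positivity), ← ENNReal.ofReal_inv_of_pos two_pos,
      ← ENNReal.ofReal_mul (by positivity)]
    refine ENNReal.ofReal_le_ofReal ?_
    rw [abs_mul, Nat.abs_cast]
    nlinarith [abs_nonneg (β k)]
  · simp

lemma enorm_seqA_le (β : ℕ → ℝ) : ‖seqA β‖ₑ ≤ seqNorm β / 2 :=
  enorm_tsum_le_tsum_enorm.trans (tsum_enorm_seqA_term_le β)

lemma abs_seqA_le {β : ℕ → ℝ} {r : ℝ} (hr : 0 ≤ r) (h : seqNorm β ≤ ENNReal.ofReal r) :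
    |seqA β| ≤ r / 2 := by
  have := (enorm_seqA_le β).trans (ENNReal.div_le_div_right h 2)
  rwa [Real.enorm_eq_ofReal_abs, ← ENNReal.ofReal_ofNat 2, ← ENNReal.ofReal_div_of_pos two_pos,
    ENNReal.ofReal_le_ofReal_iff (by positivity)] at this

lemma seqA_sub_s2 {β γ : ℕ → ℝ} (hβ : seqNorm β ≠ ∞) (hγ : seqNorm γ ≠ ∞) :
    seqA (β - γ) = seqA β - seqA γ := by
  have summable {δ : ℕ → ℝ} (hδ : seqNorm δ ≠ ∞) :
      Summable fun k : ℕ => if 2 ≤ k then (k : ℝ) * δ k else 0 :=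
    Summable.of_enorm (ne_top_of_le_ne_top (ENNReal.div_ne_top hδ two_ne_zero)
      (tsum_enorm_seqA_term_le δ))
  rw [seqA, seqA, seqA, ← (summable hβ).tsum_sub (summable hγ)]
  congr 1 with k
  split_ifs <;> simp [mul_sub]

noncomputable def fOfA (p : ℝ) (J : ℕ → ℝ) (a : ℝ) : ℕ → ℝ := fun k =>
  if 2 ≤ k then J k * fBase p a ^ k else 0

lemma fMap_eq_fOfA (p : ℝ) (J α : ℕ → ℝ) : fMap p J α = fOfA p J (seqA α) := by
  ext k
  simp only [fMap, fOfA, fBase]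
  split_ifs
  · rw [mul_pow, mul_pow, ← pow_mul]
    ring
  · rfl

lemma two_pow_mul_abs_mul_pow_le {p ε B : ℝ} {J : ℕ → ℝ} (hp : 0 < p)
    (hpB : ∀ k : ℕ, 2 ≤ k → p ^ (k - 1) * B ^ k ≤ ε * (8 : ℝ)⁻¹ ^ k)
    (hJ : ∀ k : ℕ, 2 ≤ k → |J k| ≤ B ^ k) (k : ℕ) (hk : 2 ≤ k) :
    2 ^ k * |J k| * (2 * p) ^ (k - 1) ≤ ε * 2⁻¹ ^ (k + 1) := by
  obtain ⟨m, rfl⟩ : ∃ m, k = m + 1 := ⟨k - 1, by omega⟩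
  calc 2 ^ (m + 1) * |J (m + 1)| * (2 * p) ^ m
      ≤ 2 ^ (m + 1) * B ^ (m + 1) * (2 * p) ^ m := by gcongr; exact hJ _ hk
    _ = 2 ^ (2 * m + 1) * (p ^ m * B ^ (m + 1)) := by ring
    _ ≤ 2 ^ (2 * m + 1) * (ε * 8⁻¹ ^ (m + 1)) :=
      mul_le_mul_of_nonneg_left (by simpa using hpB _ hk) (by positivity)
    _ = ε * 2⁻¹ ^ (m + 1 + 1) := by
      rw [show (8 : ℝ)⁻¹ = 2⁻¹ ^ 3 by norm_num, ← pow_mul, inv_pow, inv_pow]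
      field_simp
      ring

section Profile

variable {p ε : ℝ} {J : ℕ → ℝ}

lemma seqNorm_fOfA_le (hp : 0 < p) (hε : 0 ≤ ε)
    (hJ : ∀ k, 2 ≤ k → 2 ^ k * |J k| * (2 * p) ^ (k - 1) ≤ ε * 2⁻¹ ^ (k + 1))
    {a : ℝ} (ha : |fBase p a| ≤ 2 * p) : seqNorm (fOfA p J a) ≤ ENNReal.ofReal (p * ε) := by
  refine seqNorm_le_ofReal fun k hk => ?_
  simp only [fOfA, if_pos hk, abs_mul, abs_pow]
  rw [← pow_sub_one_mul (by omega : k ≠ 0) |fBase p a|]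
  calc 2 ^ k * (|J k| * (|fBase p a| ^ (k - 1) * |fBase p a|))
      ≤ 2 ^ k * (|J k| * ((2 * p) ^ (k - 1) * (2 * p))) := by gcongr
    _ = 2 ^ k * |J k| * (2 * p) ^ (k - 1) * (2 * p) := by ring
    _ ≤ ε * 2⁻¹ ^ (k + 1) * (2 * p) := mul_le_mul_of_nonneg_right (hJ k hk) (by positivity)
    _ ≤ p * ε * (k * 2⁻¹ ^ (k + 1)) := by
      have : (2 : ℝ) ≤ k := by exact_mod_cast hk
      have : 0 ≤ p * ε * 2⁻¹ ^ (k + 1) := by positivity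
      nlinarith

lemma seqNorm_fOfA_sub_le
    (hJ : ∀ k, 2 ≤ k → 2 ^ k * |J k| * (2 * p) ^ (k - 1) ≤ ε * 2⁻¹ ^ (k + 1))
    {a b : ℝ} (ha : |fBase p a| ≤ 2 * p) (hb : |fBase p b| ≤ 2 * p) :
    seqNorm (fOfA p J a - fOfA p J b) ≤ ENNReal.ofReal (ε * |fBase p a - fBase p b|) := by
  refine seqNorm_le_ofReal fun k hk => ?_
  simp only [Pi.sub_apply, fOfA, if_pos hk, ← mul_sub, abs_mul]
  calc 2 ^ k * (|J k| * |fBase p a ^ k - fBase p b ^ k|)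
      ≤ 2 ^ k * (|J k| * (|fBase p a - fBase p b| * k * (2 * p) ^ (k - 1))) := by
        gcongr
        exact (abs_pow_sub_pow_le _ _ k).trans (by gcongr; exact max_le ha hb)
    _ = 2 ^ k * |J k| * (2 * p) ^ (k - 1) * (k * |fBase p a - fBase p b|) := by ring
    _ ≤ ε * 2⁻¹ ^ (k + 1) * (k * |fBase p a - fBase p b|) :=
      mul_le_mul_of_nonneg_right (hJ k hk) (by positivity)
    _ = ε * |fBase p a - fBase p b| * (k * 2⁻¹ ^ (k + 1)) := by ring

end Profile

theorem ContractingWith.exists_fixedPoint_unique_tendsto {α : Type*} [MetricSpace α] {K : ℝ≥0}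
    {f : α → α} {s : Set α} (hsc : IsComplete s) (hs : s.Nonempty) (hsf : MapsTo f s s)
    (hf : ContractingWith K (hsf.restrict f s s)) :
    ∃ y ∈ s, IsFixedPt f y ∧ (∀ z ∈ s, IsFixedPt f z → z = y) ∧
      ∀ x ∈ s, Tendsto (fun n => f^[n] x) atTop (𝓝 y) := by
  have unique : ∀ y ∈ s, IsFixedPt f y → ∀ z ∈ s, IsFixedPt f z → z = y :=
    fun y hy hfy z hz hfz => congrArg Subtype.val <|
      hf.fixedPoint_unique' (x := ⟨z, hz⟩) (y := ⟨y, hy⟩) (Subtype.ext hfz) (Subtype.ext hfy)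
  obtain ⟨x₀, hx₀⟩ := hs
  obtain ⟨y, hy, hfy, -⟩ := hf.exists_fixedPoint' hsc hsf hx₀ (edist_ne_top _ _)
  refine ⟨y, hy, hfy, unique y hy hfy, fun x hx => ?_⟩
  obtain ⟨y', hy', hfy', htendsto, -⟩ := hf.exists_fixedPoint' hsc hsf hx (edist_ne_top _ _)
  rwa [unique y hy hfy y' hy' hfy'] at htendsto

noncomputable def reducedMap (p : ℝ) (J : ℕ → ℝ) (a : ℝ) : ℝ := seqA (fOfA p J a)

lemma fMap_iterate_succ (p : ℝ) (J α : ℕ → ℝ) (n : ℕ) :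
    (fMap p J)^[n + 1] α = fOfA p J ((reducedMap p J)^[n] (seqA α)) := by
  induction n with
  | zero => exact fMap_eq_fOfA p J α
  | succ n ih =>
    rw [iterate_succ_apply', ih, fMap_eq_fOfA, iterate_succ_apply', reducedMap]

section Contraction

variable {p ε : ℝ} {J : ℕ → ℝ}

lemma seqNorm_fOfA_sub_le_of_mem
    (hJ : ∀ k, 2 ≤ k → 2 ^ k * |J k| * (2 * p) ^ (k - 1) ≤ ε * 2⁻¹ ^ (k + 1)) {I : Set ℝ}
    (hbase : ∀ a ∈ I, |fBase p a| ≤ 2 * p)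
    (hlip : ∀ a ∈ I, ∀ b ∈ I, |fBase p a - fBase p b| ≤ 4 * |a - b|) (hε : 0 ≤ ε)
    {a b : ℝ} (ha : a ∈ I) (hb : b ∈ I) :
    seqNorm (fOfA p J a - fOfA p J b) ≤ ENNReal.ofReal (4 * ε * |a - b|) :=
  (seqNorm_fOfA_sub_le hJ (hbase a ha) (hbase b hb)).trans <| ENNReal.ofReal_le_ofReal <| by
    rw [mul_comm 4 ε, mul_assoc]; exact mul_le_mul_of_nonneg_left (hlip a ha b hb) hε

lemma contractingWith_reducedMap (hp : 0 < p) (hε : 0 ≤ ε) (hε8 : ε ≤ 1 / 8)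
    (hJ : ∀ k, 2 ≤ k → 2 ^ k * |J k| * (2 * p) ^ (k - 1) ≤ ε * 2⁻¹ ^ (k + 1))
    (hbase : ∀ a ∈ Metric.closedBall 0 (p * ε / 2), |fBase p a| ≤ 2 * p)
    (hlip : ∀ a ∈ Metric.closedBall 0 (p * ε / 2), ∀ b ∈ Metric.closedBall 0 (p * ε / 2),
      |fBase p a - fBase p b| ≤ 4 * |a - b|) :
    ∃ h : MapsTo (reducedMap p J) (Metric.closedBall 0 (p * ε / 2))
      (Metric.closedBall 0 (p * ε / 2)), ContractingWith (1 / 4) (h.restrict _ _ _) := by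
  have hnorm {a} (ha : a ∈ Metric.closedBall 0 (p * ε / 2)) :=
    seqNorm_fOfA_le hp hε hJ (hbase a ha)
  have hmaps : MapsTo (reducedMap p J) (Metric.closedBall 0 (p * ε / 2))
      (Metric.closedBall 0 (p * ε / 2)) := fun a ha =>
    mem_closedBall_zero_iff.2 (abs_seqA_le (by positivity) (hnorm ha))
  refine ⟨hmaps, by norm_num, LipschitzWith.of_dist_le_mul fun a b => ?_⟩
  have hsub := abs_seqA_le (by positivity)
    (seqNorm_fOfA_sub_le_of_mem hJ hbase hlip hε a.2 b.2)
  rw [seqA_sub_s2 (ne_top_of_le_ne_top ENNReal.ofReal_ne_top (hnorm a.2))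
    (ne_top_of_le_ne_top ENNReal.ofReal_ne_top (hnorm b.2))] at hsub
  simp only [Subtype.dist_eq, Real.dist_eq, MapsTo.val_restrict_apply]
  push_cast
  calc |reducedMap p J a - reducedMap p J b| ≤ 4 * ε * |(a : ℝ) - b| / 2 := hsub
    _ ≤ 1 / 4 * |(a : ℝ) - b| := by nlinarith [abs_nonneg ((a : ℝ) - b)]

end Contraction

theorem stmt2_general (p ε B : ℝ) (J : ℕ → ℝ)
    (hε0 : 0 < ε) (hε : ε < 1 / 2)
    (hcond1 : (1 / 2) * ((1 - 2 * ε)⁻¹) ^ 2 * (1 + 2 * ε) ≤ 1)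
    (hcond2 : 6 * ε / (1 - 2 * ε) ≤ 1)
    (hp0 : 0 < p) (hp1 : p ≤ 1)
    (hpB : ∀ k : ℕ, 2 ≤ k → p ^ (k - 1) * B ^ k ≤ ε * (8 : ℝ)⁻¹ ^ k)
    (hJ : ∀ k : ℕ, 2 ≤ k → |J k| ≤ B ^ k) :
    ∃ αstar : ℕ → ℝ,
      (αstar ∈ Sset p ε ∧ fMap p J αstar = αstar) ∧
      (∀ β ∈ Sset p ε, fMap p J β = β → β = αstar) ∧
      (∀ α ∈ Sset p ε,
        Filter.Tendsto (fun n : ℕ => seqNorm (fun k => (fMap p J)^[n] α k - αstar k))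
          Filter.atTop (nhds 0)) := by
  have hε8 : ε ≤ 1 / 8 := by rw [div_le_one (by linarith)] at hcond2; linarith
  have hpε : p * ε / 2 ≤ 1 / 16 := by nlinarith
  have hcoeff := two_pow_mul_abs_mul_pow_le hp0 hpB hJ
  set I := Metric.closedBall (0 : ℝ) (p * ε / 2)
  have hI {a} (ha : a ∈ I) : |a| ≤ p * ε / 2 := by simpa [I] using ha
  have hbase : ∀ a ∈ I, |fBase p a| ≤ 2 * p := fun a ha =>
    (abs_fBase_le hp0 hp1 hε (by nlinarith [hI ha])).trans (by nlinarith)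
  have hlip : ∀ a ∈ I, ∀ b ∈ I, |fBase p a - fBase p b| ≤ 4 * |a - b| := fun a ha b hb =>
    abs_fBase_sub_le hp0 hp1 ((hI ha).trans hpε) ((hI hb).trans hpε)
  have hA {β} (hβ : β ∈ Sset p ε) : seqA β ∈ I :=
    mem_closedBall_zero_iff.2 (abs_seqA_le (by positivity) hβ)
  obtain ⟨hmaps, hcontr⟩ := contractingWith_reducedMap hp0 hε0.le hε8 hcoeff hbase hlip
  obtain ⟨a, ha, hfix, hunique, htendsto⟩ := hcontr.exists_fixedPoint_unique_tendsto
    Metric.isClosed_closedBall.isComplete ⟨0, by simp; positivity⟩ hmaps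
  refine ⟨fOfA p J a, ⟨seqNorm_fOfA_le hp0 hε0.le hcoeff (hbase a ha), ?_⟩,
    fun β hβ hβfix => ?_, fun α hα => ?_⟩
  · rw [fMap_eq_fOfA]; exact congrArg _ hfix
  · have hβ' : β = fOfA p J (seqA β) := hβfix.symm.trans (fMap_eq_fOfA p J β)
    rw [hβ', hunique _ (hA hβ) (by rw [IsFixedPt, reducedMap, ← hβ'])]
  · refine (tendsto_add_atTop_iff_nat 1).1 ?_
    simp only [fMap_iterate_succ]
    refine tendsto_of_tendsto_of_tendsto_of_le_of_le tendsto_const_nhds ?_ (fun _ => zero_le)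
      fun n => seqNorm_fOfA_sub_le_of_mem hcoeff hbase hlip hε0.le (hmaps.iterate n (hA hα)) ha
    have := ((tendsto_iff_norm_sub_tendsto_zero.1 (htendsto _ (hA hα))).const_mul (4 * ε))
    simpa using ENNReal.tendsto_ofReal this

theorem stmt2 (p ε B : ℝ) (J : ℕ → ℝ)
    (hε0 : 0 < ε) (hε : ε < 1 / 2)
    (hcond1 : (1 / 2) * ((1 - 2 * ε)⁻¹) ^ 2 * (1 + 2 * ε) ≤ 1)
    (hcond2 : 6 * ε / (1 - 2 * ε) ≤ 1)
    (hp0 : 0 < p) (hp1 : p ≤ 1) (hB : 0 < B)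
    (hpB : ∀ k : ℕ, 2 ≤ k → p ^ (k - 1) * B ^ k ≤ ε * (8 : ℝ)⁻¹ ^ k)
    (hJ : ∀ k : ℕ, 2 ≤ k → |J k| ≤ B ^ k) :
    ∃ αstar : ℕ → ℝ,
      (αstar ∈ Sset p ε ∧ fMap p J αstar = αstar) ∧
      (∀ β ∈ Sset p ε, fMap p J β = β → β = αstar) ∧
      (∀ α ∈ Sset p ε,
        Filter.Tendsto (fun n : ℕ => seqNorm (fun k => (fMap p J)^[n] α k - αstar k))
          Filter.atTop (nhds 0)) :=
  stmt2_general p ε B J hε0 hε hcond1 hcond2 hp0 hp1 hpB hJ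
end

section
/- Let A ∈ ℝ⟦X,Y⟧ be supported in R. (Every monomial of A then has X-degree ≥ 2; in particular the constant term of A vanishes, so 1 − 2A is a unit, and A = X·B for a unique B ∈ ℝ⟦X,Y⟧.) Fix an integer k ≥ 2 and let J ∈ ℝ⟦X,Y⟧ be a polynomial in Y alone, supported on exponents (0, s) with k ≤ 2s and s < k. Then the product J · X^k · (1 − 2A)^{−2k} · (1 − 2B)^k is supported in R ∩ {(i, j) ∈ ℕ² : i ≥ k}. -/
/-!
The closed cone `{(i, j) : i ≤ 2j, j ≤ i}` is an additive submonoid of `ℕ²`, and power series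
supported in an additive submonoid are closed under products, powers and inverses (the recursion
for the coefficients of `f⁻¹` only adds exponents of `f`). Since `A = X·B` is supported in `R`,
both `1 - 2A` and `1 - 2B` are supported in the cone. The factor `J · X^k` is supported in
`R ∩ {i ≥ k}`, and adding a point of the cone never leaves this set.
-/

/-- A two-variable formal power series is supported in `T ⊆ ℕ²` if every monomial
`X^i Y^j` with nonzero coefficient has `(i, j) ∈ T`. -/
def SupportedIn (f : MvPowerSeries (Fin 2) ℝ) (T : Set (ℕ × ℕ)) : Prop :=
  ∀ m : Fin 2 →₀ ℕ, MvPowerSeries.coeff m f ≠ 0 → (m 0, m 1) ∈ T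

/-- The region `R = {(i,j) : i ≤ 2j and j < i}`. -/
def Rset : Set (ℕ × ℕ) := {ij | ij.1 ≤ 2 * ij.2 ∧ ij.2 < ij.1}

open scoped Pointwise

namespace MvPowerSeries

variable {σ : Type*}

lemma exists_add_eq_of_coeff_mul_ne_zero {R : Type*} [Semiring R] {f g : MvPowerSeries σ R}
    {m : σ →₀ ℕ} (h : coeff m (f * g) ≠ 0) :
    ∃ a b, a + b = m ∧ coeff a f ≠ 0 ∧ coeff b g ≠ 0 := by
  classical
  rw [coeff_mul] at h
  obtain ⟨⟨a, b⟩, hab, hne⟩ := Finset.exists_ne_zero_of_sum_ne_zero h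
  exact ⟨a, b, Finset.HasAntidiagonal.mem_antidiagonal.mp hab, left_ne_zero_of_mul hne,
    right_ne_zero_of_mul hne⟩

lemma exists_add_eq_of_coeff_inv_ne_zero {k : Type*} [Field k] {f : MvPowerSeries σ k}
    {m : σ →₀ ℕ} (hm : m ≠ 0) (h : coeff m f⁻¹ ≠ 0) :
    ∃ a b, a + b = m ∧ b < m ∧ coeff a f ≠ 0 ∧ coeff b f⁻¹ ≠ 0 := by
  classical
  rw [coeff_inv, if_neg hm] at h
  obtain ⟨⟨a, b⟩, hab, hne⟩ := Finset.exists_ne_zero_of_sum_ne_zero (right_ne_zero_of_mul h)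
  have hlt : b < m := by_contra fun hb => hne (if_neg hb)
  rw [if_pos hlt] at hne
  exact ⟨a, b, Finset.HasAntidiagonal.mem_antidiagonal.mp hab, hlt, left_ne_zero_of_mul hne,
    right_ne_zero_of_mul hne⟩

end MvPowerSeries

open MvPowerSeries

namespace SupportedIn

variable {f g : MvPowerSeries (Fin 2) ℝ} {S T : Set (ℕ × ℕ)}

lemma mono (hf : SupportedIn f S) (hST : S ⊆ T) : SupportedIn f T :=
  fun m hm => hST (hf m hm)

lemma one (h : (0, 0) ∈ T) : SupportedIn 1 T := by
  classical
  intro m hm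
  obtain rfl : m = 0 := by_contra fun h0 => hm (by rw [coeff_one, if_neg h0])
  exact h

lemma add (hf : SupportedIn f T) (hg : SupportedIn g T) : SupportedIn (f + g) T := by
  intro m hm
  by_cases hfm : coeff m f = 0
  · exact hg m (by simpa [hfm] using hm)
  · exact hf m hfm

lemma neg (hf : SupportedIn f T) : SupportedIn (-f) T :=
  fun m hm => hf m (by simpa using hm)

lemma sub (hf : SupportedIn f T) (hg : SupportedIn g T) : SupportedIn (f - g) T :=
  sub_eq_add_neg f g ▸ hf.add hg.neg

lemma one_sub_two_mul (h : (0, 0) ∈ T) (hf : SupportedIn f T) : SupportedIn (1 - 2 * f) T :=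
  (one h).sub (two_mul f ▸ hf.add hf)

lemma mul (hf : SupportedIn f S) (hg : SupportedIn g T) : SupportedIn (f * g) (S + T) := by
  intro m hm
  obtain ⟨a, b, rfl, ha, hb⟩ := exists_add_eq_of_coeff_mul_ne_zero hm
  exact Set.add_mem_add (hf a ha) (hg b hb)

variable {M : AddSubmonoid (ℕ × ℕ)}

lemma pow (hf : SupportedIn f M) (n : ℕ) : SupportedIn (f ^ n) M := by
  induction n with
  | zero => exact one M.zero_mem
  | succ n ih => exact (ih.mul hf).mono (AddSubmonoid.coe_add_self_eq M).subset

lemma inv (hf : SupportedIn f M) : SupportedIn f⁻¹ M := by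
  intro m
  induction m using WellFoundedLT.induction with
  | _ m ih =>
    intro hm
    by_cases h0 : m = 0
    · subst h0; exact M.zero_mem
    obtain ⟨a, b, rfl, hlt, ha, hb⟩ := exists_add_eq_of_coeff_inv_ne_zero h0 hm
    exact M.add_mem (hf a ha) (ih b hlt hb)

end SupportedIn

def cone : AddSubmonoid (ℕ × ℕ) where
  carrier := {ij | ij.1 ≤ 2 * ij.2 ∧ ij.2 ≤ ij.1}
  add_mem' := by
    rintro ⟨a, b⟩ ⟨c, d⟩ ⟨h₁, h₂⟩ ⟨h₃, h₄⟩
    simp only [Prod.mk_add_mk, Set.mem_ofPred_eq] at *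
    omega
  zero_mem' := by simp

lemma Rset_subset_cone : Rset ⊆ cone := fun _ h => ⟨h.1, h.2.le⟩

lemma Rset_inter_add_cone_subset (k : ℕ) :
    (Rset ∩ {ij | k ≤ ij.1}) + (cone : Set (ℕ × ℕ)) ⊆ Rset ∩ {ij | k ≤ ij.1} := by
  rw [Set.add_subset_iff]
  rintro ⟨a, b⟩ ⟨⟨h₁, h₂⟩, h₃⟩ ⟨c, d⟩ ⟨h₄, h₅⟩
  simp only [Prod.mk_add_mk, Rset, Set.mem_inter_iff, Set.mem_ofPred_eq] at *
  omega

lemma supportedIn_X_zero_pow (k : ℕ) :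
    SupportedIn ((X 0 : MvPowerSeries (Fin 2) ℝ) ^ k) {(k, 0)} := by
  classical
  intro m hm
  obtain rfl : m = Finsupp.single 0 k := by_contra fun h => hm (by rw [coeff_X_pow, if_neg h])
  simp

lemma SupportedIn.of_X_zero_mul {B : MvPowerSeries (Fin 2) ℝ} {T : Set (ℕ × ℕ)}
    (h : SupportedIn (X 0 * B) T) : SupportedIn B {q | (q.1 + 1, q.2) ∈ T} := by
  intro m hm
  have hcoeff : coeff (Finsupp.single 0 1 + m) (X 0 * B) = coeff m B := by
    rw [X, coeff_add_monomial_mul, one_mul]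
  have hmem := h _ (hcoeff ▸ hm)
  simp only [Finsupp.add_apply, Finsupp.single_eq_same,
    Finsupp.single_eq_of_ne (show (1 : Fin 2) ≠ 0 by decide), zero_add] at hmem
  simpa [add_comm] using hmem

theorem stmt7_general (A B J : MvPowerSeries (Fin 2) ℝ) (k : ℕ)
    (hA : SupportedIn A Rset)
    (hAB : A = MvPowerSeries.X 0 * B)
    (hJ : SupportedIn J {q : ℕ × ℕ | q.1 = 0 ∧ k ≤ 2 * q.2 ∧ q.2 < k}) :
    SupportedIn
      (J * (MvPowerSeries.X 0) ^ k * ((1 - 2 * A)⁻¹) ^ (2 * k) * (1 - 2 * B) ^ k)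
      (Rset ∩ {ij : ℕ × ℕ | k ≤ ij.1}) := by
  have hA' : SupportedIn A cone := hA.mono Rset_subset_cone
  have hB : SupportedIn B cone :=
    (hAB ▸ hA).of_X_zero_mul.mono fun _ ⟨h₁, h₂⟩ => ⟨by omega, by omega⟩
  have hJX : SupportedIn (J * X 0 ^ k) (Rset ∩ {ij | k ≤ ij.1}) := by
    refine (hJ.mul (supportedIn_X_zero_pow k)).mono ?_
    rw [Set.add_singleton]
    rintro _ ⟨⟨a, b⟩, ⟨h₁, h₂, h₃⟩, rfl⟩
    simp only [Prod.mk_add_mk, Rset, Set.mem_inter_iff, Set.mem_ofPred_eq] at *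
    omega
  have hInv := ((SupportedIn.one_sub_two_mul cone.zero_mem hA').inv).pow (2 * k)
  have hBk := (SupportedIn.one_sub_two_mul cone.zero_mem hB).pow k
  exact (((hJX.mul hInv).mono (Rset_inter_add_cone_subset k)).mul hBk).mono
    (Rset_inter_add_cone_subset k)

theorem stmt7 (A B J : MvPowerSeries (Fin 2) ℝ) (k : ℕ) (hk : 2 ≤ k)
    (hA : SupportedIn A Rset)
    (hAB : A = MvPowerSeries.X 0 * B)
    (hJ : SupportedIn J {q : ℕ × ℕ | q.1 = 0 ∧ k ≤ 2 * q.2 ∧ q.2 < k}) :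
    SupportedIn
      (J * (MvPowerSeries.X 0) ^ k * ((1 - 2 * A)⁻¹) ^ (2 * k) * (1 - 2 * B) ^ k)
      (Rset ∩ {ij : ℕ × ℕ | k ≤ ij.1}) :=
  stmt7_general A B J k hA hAB hJ
end
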